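/- For any multiset {t_1,...,t_n} of standard normalized ground terms, zap(nf(t_1 ⊕ ... ⊕ t_n)) = nf(zap(t_1) ⊕ ... ⊕ zap(t_n)). -/

import Mathlib

/- A formalization of the Dolev-Yao intruder model with XOR, following
"Protocol insecurity with finitely many sessions and XOR".
Multisets of terms (for the XOR operator) are represented by lists;
the normal form of an XOR term is represented canonically by sorting the
(normalized) factors in a fixed linear order (via an injective encoding of
terms into ℕ) and cancelling pairs of equal factors (nilpotence). -/

namespace DYXor

/-- Terms: variables, names (with the distinguished names `0` and `secret`,
and keys among the names), public keys, pairs, symmetric and asymmetric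
encryptions, and XORs of (multi)sets of terms. -/
inductive Term : Type where
  | var : ℕ → Term
  | name : ℕ → Term
  | pk : Term → Term
  | pair : Term → Term → Term
  | senc : Term → Term → Term
  | aenc : Term → Term → Term
  | xor : List Term → Term

/-- The distinguished name `0`, the unit of XOR. -/
def Term.zero : Term := .name 0

/-- The distinguished name `secret`. -/
def Term.secret : Term := .name 1

/-- A term is standard if it is not an XOR term. -/
def Term.IsStandard : Term → Prop
  | .xor _ => False
  | _ => True

/-- The factors of a term, as a list (representing a multiset):
`fac(t) = {t}` for standard `t`, and the multiset union of the factors of the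
members for an XOR term. -/
def facL : Term → List Term
  | .var x => [.var x]
  | .name a => [.name a]
  | .pk u => [.pk u]
  | .pair u v => [.pair u v]
  | .senc u v => [.senc u v]
  | .aenc u v => [.aenc u v]
  | .xor M => M.attach.flatMap fun u => facL u.1
decreasing_by
  have := List.sizeOf_lt_of_mem u.2
  simp only [Term.xor.sizeOf_spec]
  omega

/-- An injective encoding of terms into ℕ, fixing a canonical linear order on
terms. -/
def encode : Term → ℕ
  | .var x => Nat.pair 0 x + 1
  | .name a => Nat.pair 1 a + 1
  | .pk u => Nat.pair 2 (encode u) + 1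
  | .pair u v => Nat.pair 3 (Nat.pair (encode u) (encode v)) + 1
  | .senc u v => Nat.pair 4 (Nat.pair (encode u) (encode v)) + 1
  | .aenc u v => Nat.pair 5 (Nat.pair (encode u) (encode v)) + 1
  | .xor M => Nat.pair 6 ((M.attach.map fun u => encode u.1).foldr (fun a b => Nat.pair a b + 1) 0) + 1
decreasing_by
  all_goals first
  | (have := List.sizeOf_lt_of_mem u.2; simp only [Term.xor.sizeOf_spec]; omega)
  | (simp only [Term.pk.sizeOf_spec, Term.pair.sizeOf_spec, Term.senc.sizeOf_spec,
      Term.aenc.sizeOf_spec]; omega)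

/-- Sort a list of terms in the canonical order. -/
def sortT (l : List Term) : List Term :=
  l.mergeSort fun a b => Nat.ble (encode a) (encode b)

/-- On a (sorted) list, remove pairs of equal adjacent elements, keeping
exactly the elements that occur an odd number of times (nilpotence of ⊕). -/
def cancel : List Term → List Term
  | [] => []
  | [a] => [a]
  | a :: b :: rest =>
      if encode a = encode b then cancel rest else a :: cancel (b :: rest)

/-- `xorOf B` is the term `⊕B`, with the conventions `⊕∅ := 0` and `⊕{t} := t`. -/
def xorOf : List Term → Term
  | [] => Term.zero
  | [t] => t
  | l => .xor l

theorem sizeOf_le_of_mem_facL : ∀ (t : Term), ∀ u ∈ facL t, sizeOf u ≤ sizeOf t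
  | .xor M => by
    intro u hu
    rw [facL] at hu
    simp only [List.mem_flatMap, List.mem_attach, true_and] at hu
    obtain ⟨⟨m, hm⟩, hu⟩ := hu
    have h1 : sizeOf u ≤ sizeOf m := sizeOf_le_of_mem_facL m u hu
    have h2 := List.sizeOf_lt_of_mem hm
    simp only [Term.xor.sizeOf_spec]
    omega
  | .var x => by intro u hu; rw [facL] at hu; simp at hu; simp [hu]
  | .name a => by intro u hu; rw [facL] at hu; simp at hu; simp [hu]
  | .pk v => by intro u hu; rw [facL] at hu; simp at hu; simp [hu]
  | .pair v w => by intro u hu; rw [facL] at hu; simp at hu; simp [hu]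
  | .senc v w => by intro u hu; rw [facL] at hu; simp at hu; simp [hu]
  | .aenc v w => by intro u hu; rw [facL] at hu; simp at hu; simp [hu]
decreasing_by
  all_goals (have := List.sizeOf_lt_of_mem hm; simp only [Term.xor.sizeOf_spec]; omega)

theorem sizeOf_lt_of_mem_facL_xor (M : List Term) :
    ∀ u ∈ facL (.xor M), sizeOf u < sizeOf (Term.xor M) := by
  intro u hu
  rw [facL] at hu
  simp only [List.mem_flatMap, List.mem_attach, true_and] at hu
  obtain ⟨⟨m, hm⟩, hu⟩ := hu
  have h1 := sizeOf_le_of_mem_facL m u hu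
  have h2 := List.sizeOf_lt_of_mem hm
  simp only [Term.xor.sizeOf_spec]
  omega

/-- The normal form `nf(t)` of a term, implementing associativity,
commutativity, the unit `0` and nilpotence of ⊕: the normal form of an XOR
term `r` is the XOR of the *set* of those terms `v` such that the number of
factors `u ∈ fac(r)` with `nf(u) = v` is odd (represented canonically as a
sorted list). -/
def nf : Term → Term
  | .var x => .var x
  | .name a => .name a
  | .pk u => .pk (nf u)
  | .pair u v => .pair (nf u) (nf v)
  | .senc u v => .senc (nf u) (nf v)
  | .aenc u v => .aenc (nf u) (nf v)
  | .xor M => xorOf (cancel (sortT ((facL (.xor M)).attach.map fun u => nf u.1)))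
decreasing_by
  all_goals first
  | (exact sizeOf_lt_of_mem_facL_xor M u.1 u.2)
  | (simp only [Term.pk.sizeOf_spec, Term.pair.sizeOf_spec, Term.senc.sizeOf_spec,
      Term.aenc.sizeOf_spec]; omega)

/-- A term is normalized if it equals its normal form. -/
def Term.Normalized (t : Term) : Prop := nf t = t

/-- Application of a substitution (a map from variables to terms, the identity
outside its domain), extended homomorphically to all terms. -/
def subst (σ : ℕ → Term) : Term → Term
  | .var x => σ x
  | .name a => .name a
  | .pk u => .pk (subst σ u)
  | .pair u v => .pair (subst σ u) (subst σ v)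
  | .senc u v => .senc (subst σ u) (subst σ v)
  | .aenc u v => .aenc (subst σ u) (subst σ v)
  | .xor M => .xor (M.attach.map fun u => subst σ u.1)
decreasing_by
  all_goals first
  | (have := List.sizeOf_lt_of_mem u.2; simp only [Term.xor.sizeOf_spec]; omega)
  | (simp only [Term.pk.sizeOf_spec, Term.pair.sizeOf_spec, Term.senc.sizeOf_spec,
      Term.aenc.sizeOf_spec]; omega)

/-- `IsFactor u t`: `u` occurs in the multiset `fac(t)` of factors of `t`. -/
inductive IsFactor : Term → Term → Prop where
  | std {t : Term} : t.IsStandard → IsFactor t t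
  | xor {t u : Term} {M : List Term} : u ∈ M → IsFactor t u → IsFactor t (.xor M)

/-- The subterm relation: `Subterm u t` iff `u ∈ st(t)`. -/
inductive Subterm : Term → Term → Prop where
  | refl (t : Term) : Subterm t t
  | pk {s u : Term} : Subterm s u → Subterm s (.pk u)
  | pair_l {s u v : Term} : Subterm s u → Subterm s (.pair u v)
  | pair_r {s u v : Term} : Subterm s v → Subterm s (.pair u v)
  | senc_l {s u v : Term} : Subterm s u → Subterm s (.senc u v)
  | senc_r {s u v : Term} : Subterm s v → Subterm s (.senc u v)
  | aenc_l {s u v : Term} : Subterm s u → Subterm s (.aenc u v)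
  | aenc_r {s u v : Term} : Subterm s v → Subterm s (.aenc u v)
  | xor {s u : Term} {M : List Term} :
      IsFactor u (.xor M) → Subterm s u → Subterm s (.xor M)

/-- `st(t)` as a set of terms. -/
def stT (t : Term) : Set Term := {u | Subterm u t}

/-- `st(X)` for a set of terms `X`. -/
def stSet (X : Set Term) : Set Term := {u | ∃ t ∈ X, Subterm u t}

/-- The variables occurring in a term. -/
def varsT (t : Term) : Set ℕ := {x | Subterm (.var x) t}

/-- A term is ground if no variable occurs in it. -/
def Ground (t : Term) : Prop := ∀ x : ℕ, ¬ Subterm (.var x) t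

/-- The rules of the Dolev-Yao derivation system. -/
inductive Rule : Type where
  | ax | split1 | split2 | sdec | adec | pkR | pairR | sencR | aencR | xorR
  deriving DecidableEq

/-- Proof trees: each node carries a term (its conclusion) and a rule. -/
inductive PTree : Type where
  | node : Term → Rule → List PTree → PTree

/-- The conclusion of a proof: the term at its root. -/
def PTree.conc : PTree → Term
  | .node t _ _ => t

/-- The last rule of a proof: the rule at its root. -/
def PTree.rule : PTree → Rule
  | .node _ r _ => r

/-- `IsProof X π` says that `π` is a derivation (proof) of `X ⊢ conc(π)`:
every node is labelled by a normalized term and is a correct instance of a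
Dolev-Yao rule, and `ax`-leaves are labelled by terms of `X`. -/
inductive IsProof (X : Set Term) : PTree → Prop where
  | ax {t : Term} : t ∈ X → nf t = t → IsProof X (.node t .ax [])
  | split1 {t u : Term} {δ : PTree} :
      IsProof X δ → δ.conc = .pair t u → IsProof X (.node t .split1 [δ])
  | split2 {t u : Term} {δ : PTree} :
      IsProof X δ → δ.conc = .pair t u → IsProof X (.node u .split2 [δ])
  | sdec {t v : Term} {δ₁ δ₂ : PTree} :
      IsProof X δ₁ → IsProof X δ₂ → δ₁.conc = .senc t v → δ₂.conc = v →
      IsProof X (.node t .sdec [δ₁, δ₂])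
  | adec {t : Term} {k : ℕ} {δ₁ δ₂ : PTree} :
      IsProof X δ₁ → IsProof X δ₂ → δ₁.conc = .aenc t (.pk (.name k)) →
      δ₂.conc = .name k → IsProof X (.node t .adec [δ₁, δ₂])
  | pkR {k : ℕ} {δ : PTree} :
      IsProof X δ → δ.conc = .name k → IsProof X (.node (.pk (.name k)) .pkR [δ])
  | pairR {δ₁ δ₂ : PTree} :
      IsProof X δ₁ → IsProof X δ₂ →
      IsProof X (.node (.pair δ₁.conc δ₂.conc) .pairR [δ₁, δ₂])
  | sencR {δ₁ δ₂ : PTree} :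
      IsProof X δ₁ → IsProof X δ₂ →
      IsProof X (.node (.senc δ₁.conc δ₂.conc) .sencR [δ₁, δ₂])
  | aencR {k : ℕ} {δ₁ δ₂ : PTree} :
      IsProof X δ₁ → IsProof X δ₂ → δ₂.conc = .pk (.name k) →
      IsProof X (.node (.aenc δ₁.conc (.pk (.name k))) .aencR [δ₁, δ₂])
  | xorR {l : List PTree} :
      (∀ δ ∈ l, IsProof X δ) →
      IsProof X (.node (nf (.xor (l.map PTree.conc))) .xorR l)

/-- `X ⊢_dy t`: there is a proof of `X ⊢ t`. -/
def Derives (X : Set Term) (t : Term) : Prop :=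
  ∃ π : PTree, IsProof X π ∧ π.conc = t

/-- The subproof (subtree) relation on proof trees. -/
inductive Subproof : PTree → PTree → Prop where
  | refl (π : PTree) : Subproof π π
  | child {π δ : PTree} {t : Term} {r : Rule} {l : List PTree} :
      δ ∈ l → Subproof π δ → Subproof π (.node t r l)

/-- `terms(π)`: the set of terms labelling the nodes of `π`. -/
def termsOf (π : PTree) : Set Term := {u | ∃ δ : PTree, Subproof δ π ∧ δ.conc = u}

/-- `axioms(π)`: the set of terms labelling the `ax`-leaves of `π`. -/
def axiomsOf (π : PTree) : Set Term :=
  {u | ∃ δ : PTree, Subproof δ π ∧ δ.rule = .ax ∧ δ.conc = u}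

/-- The constructor rules `pk`, `pair`, `senc`, `aenc`. -/
def Rule.IsConstructor (r : Rule) : Prop :=
  r = .pkR ∨ r = .pairR ∨ r = .sencR ∨ r = .aencR

/-- The destructor rules `split`, `sdec`, `adec` (excluding `xor_d`). -/
def Rule.IsBasicDestructor (r : Rule) : Prop :=
  r = .split1 ∨ r = .split2 ∨ r = .sdec ∨ r = .adec

/-- A proof ends in a destructor if its last rule is `split`/`sdec`/`adec`,
or is an `xor` with standard conclusion (`xor_d`). -/
def PTree.EndsInDestructor (π : PTree) : Prop :=
  π.rule.IsBasicDestructor ∨ (π.rule = .xorR ∧ π.conc.IsStandard)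

/-- Normal proofs: (1) no occurrence of `split`/`sdec`/`adec` has its leftmost
(major) premise derived by a constructor rule; (2) in every occurrence of the
`xor` rule, no two premises are equal, no premise equals the conclusion, and no
premise is derived by an `xor` rule. -/
inductive Normal : PTree → Prop where
  | mk {t : Term} {r : Rule} {l : List PTree} :
      (∀ δ ∈ l, Normal δ) →
      (r.IsBasicDestructor → ∀ δ₁ ∈ l.head?, ¬ δ₁.rule.IsConstructor) →
      (r = .xorR →
        (l.map PTree.conc).Nodup ∧ (∀ δ ∈ l, δ.conc ≠ t) ∧ (∀ δ ∈ l, δ.rule ≠ .xorR)) →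
      Normal (.node t r l)

/-- `RuleStep Y u`: `u` is the conclusion of a rule instance all of whose
premises lie in `Y`. -/
inductive RuleStep (Y : Set Term) : Term → Prop where
  | split1 {t u : Term} : Term.pair t u ∈ Y → RuleStep Y t
  | split2 {t u : Term} : Term.pair t u ∈ Y → RuleStep Y u
  | sdec {t v : Term} : Term.senc t v ∈ Y → v ∈ Y → RuleStep Y t
  | adec {t : Term} {k : ℕ} : Term.aenc t (.pk (.name k)) ∈ Y → Term.name k ∈ Y → RuleStep Y t
  | pkR {k : ℕ} : Term.name k ∈ Y → RuleStep Y (.pk (.name k))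
  | pairR {u v : Term} : u ∈ Y → v ∈ Y → RuleStep Y (.pair u v)
  | sencR {u v : Term} : u ∈ Y → v ∈ Y → RuleStep Y (.senc u v)
  | aencR {u : Term} {k : ℕ} : u ∈ Y → Term.pk (.name k) ∈ Y → RuleStep Y (.aenc u (.pk (.name k)))
  | xorR {l : List Term} : (∀ s ∈ l, s ∈ Y) → RuleStep Y (nf (.xor l))

/-- `one-step(Y)` relative to the ambient set `st`. -/
def oneStep (st : Set Term) (Y : Set Term) : Set Term :=
  Y ∪ {u ∈ st | RuleStep Y u}

/-- Relabel every node of a proof tree by applying `g` to its term. -/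
def mapTree (g : Term → Term) : PTree → PTree
  | .node t r l => .node (g t) r (l.attach.map fun d => mapTree g d.1)
decreasing_by
  have := List.sizeOf_lt_of_mem d.2
  simp only [PTree.node.sizeOf_spec]
  omega

attribute [local instance] Classical.propDecidable

/-- `zap` relative to a set `T` of terms (to be instantiated with `nf(Dσ)`):
`zap(a) = a` for atomic `a`; `zap(t) = 0` for zappable `t` (a non-atomic
standard term with `nf(t) ∉ T`); otherwise `zap` is applied to the arguments
and the result is normalized. -/
noncomputable def zap (T : Set Term) : Term → Term
  | .var x => .var x
  | .name a => .name a
  | .pk u => if nf (.pk u) ∈ T then nf (.pk (zap T u)) else Term.zero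
  | .pair u v => if nf (.pair u v) ∈ T then nf (.pair (zap T u) (zap T v)) else Term.zero
  | .senc u v => if nf (.senc u v) ∈ T then nf (.senc (zap T u) (zap T v)) else Term.zero
  | .aenc u v => if nf (.aenc u v) ∈ T then nf (.aenc (zap T u) (zap T v)) else Term.zero
  | .xor M => nf (.xor (M.attach.map fun u => zap T u.1))
decreasing_by
  all_goals first
  | (have := List.sizeOf_lt_of_mem u.2; simp only [Term.xor.sizeOf_spec]; omega)
  | (simp only [Term.pk.sizeOf_spec, Term.pair.sizeOf_spec, Term.senc.sizeOf_spec,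
      Term.aenc.sizeOf_spec]; omega)

/-- A proof is typed if each of its subproofs either ends in a constructor
rule, or has a typed conclusion (a member of `T = nf(Dσ)`), or has a
non-standard conclusion. -/
def TypedProof (T : Set Term) (π : PTree) : Prop :=
  ∀ δ : PTree, Subproof δ π → δ.rule.IsConstructor ∨ δ.conc ∈ T ∨ ¬ δ.conc.IsStandard

/-- A role: initial knowledge together with a sequence of (receive, send) pairs. -/
structure Role : Type where
  know : Set Term
  seq : List (Term × Term)

/-- The variables of a list of (receive, send) pairs. -/
def varsRS (ρ : List (Term × Term)) : Set ℕ :=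
  {x | ∃ p ∈ ρ, Subterm (.var x) p.1 ∨ Subterm (.var x) p.2}

/-- The agent variables of a role sequence: the variables that first occur in
a send, i.e. `⋃_i (vars(s_i) \ vars({r_1, …, r_i}))`. -/
def varsA (ρ : List (Term × Term)) : Set ℕ :=
  {x | ∃ i : Fin ρ.length, Subterm (.var x) (ρ.get i).2 ∧
        ∀ j : Fin ρ.length, j.1 ≤ i.1 → ¬ Subterm (.var x) (ρ.get j).1}

/-- The intruder variables of a role sequence. -/
def varsI (ρ : List (Term × Term)) : Set ℕ := varsRS ρ \ varsA ρ

/-- Well-formed roles: the initial knowledge is a finite set of standard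
normalized terms whose variables are agent variables, and every send is
derivable from the initial knowledge together with the receives up to that
point. -/
def Role.WF (R : Role) : Prop :=
  R.know.Finite ∧
  (∀ t ∈ R.know, t.IsStandard ∧ nf t = t) ∧
  (∀ t ∈ R.know, ∀ x : ℕ, Subterm (.var x) t → x ∈ varsA R.seq) ∧
  ∀ i : Fin R.seq.length,
    Derives (R.know ∪ {u | ∃ j : Fin R.seq.length, j.1 ≤ i.1 ∧ u = (R.seq.get j).1})
      (R.seq.get i).2

/-- A protocol: the intruder's initial knowledge and a finite list of roles. -/
structure Protocol : Type where
  init : Set Term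
  roles : List Role

/-- Well-formed protocols: the initial knowledge is a finite set of normalized
ground terms, and all roles are well-formed. -/
def Protocol.WF (P : Protocol) : Prop :=
  P.init.Finite ∧ (∀ t ∈ P.init, nf t = t ∧ Ground t) ∧ ∀ R ∈ P.roles, R.WF

/-- The instantiation `ρτ` of a role sequence by a substitution. -/
def instSeq (R : Role) (τ : ℕ → Term) : List (Term × Term) :=
  R.seq.map fun p => (subst τ p.1, subst τ p.2)

/-- A session of a protocol: a role together with a substitution sending agent
variables to names and intruder variables to variables, with the instantiated
sequence consisting of normalized terms. -/
def IsSession (P : Protocol) (R : Role) (τ : ℕ → Term) : Prop :=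
  R ∈ P.roles ∧
  (∀ x ∈ varsA R.seq, ∃ a : ℕ, τ x = .name a) ∧
  (∀ x ∈ varsI R.seq, ∃ y : ℕ, τ x = .var y) ∧
  (∀ p ∈ instSeq R τ, nf p.1 = p.1 ∧ nf p.2 = p.2)

/-- Two sessions are coherent if their instantiated sequences share no variables. -/
def Coherent (s₁ s₂ : Role × (ℕ → Term)) : Prop :=
  ∀ x : ℕ, ¬ (x ∈ varsRS (instSeq s₁.1 s₁.2) ∧ x ∈ varsRS (instSeq s₂.1 s₂.2))

/-- `Interleave ls l`: `l` is an interleaving of the lists in `ls`. -/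
inductive Interleave {α : Type} : List (List α) → List α → Prop where
  | nil {ls : List (List α)} : (∀ l ∈ ls, l = []) → Interleave ls []
  | cons {ls : List (List α)} {i : Fin ls.length} {x : α} {xs ys : List α} :
      ls.get i = x :: xs → Interleave (ls.set i xs) ys → Interleave ls (x :: ys)

/-- The set `X_i` of a run: the initial knowledge `X₀` together with the first
`i` sent messages of `ξ`. -/
def runKnow (P : Protocol) (ξ : List (Term × Term)) (i : ℕ) : Set Term :=
  P.init ∪ {u | ∃ j : Fin ξ.length, j.1 < i ∧ u = (ξ.get j).2}

/-- `nf(Xσ) = {nf(tσ) : t ∈ X}`. -/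
def nfSubst (σ : ℕ → Term) (X : Set Term) : Set Term :=
  {u | ∃ t ∈ X, u = nf (subst σ t)}

/-- `(ξ, σ)` is a run generated by the pairwise coherent sessions `S` of `P`:
`ξ` is a prefix of an interleaving of the instantiated role sequences, `σ` is
a normalized ground substitution with domain `vars(ξ)`, and each received
message is derivable (after substitution and normalization) from the initial
knowledge together with the previously sent messages. -/
def IsRun (P : Protocol) (S : List (Role × (ℕ → Term)))
    (ξ : List (Term × Term)) (σ : ℕ → Term) : Prop :=
  (∀ s ∈ S, IsSession P s.1 s.2) ∧
  S.Pairwise Coherent ∧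
  (∃ full : List (Term × Term),
      Interleave (S.map fun s => instSeq s.1 s.2) full ∧ ξ.IsPrefix full) ∧
  (∀ x ∈ varsRS ξ, Ground (σ x) ∧ nf (σ x) = σ x) ∧
  (∀ x : ℕ, x ∉ varsRS ξ → σ x = .var x) ∧
  ∀ j : Fin ξ.length,
    Derives (nfSubst σ (runKnow P ξ j.1)) (nf (subst σ (ξ.get j).1))

/-- The set `C` associated with a run: all subterms of the initial knowledge,
the instantiated role knowledges, the messages of the run, and `secret`. -/
def Cset (P : Protocol) (S : List (Role × (ℕ → Term)))
    (ξ : List (Term × Term)) : Set Term :=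
  stSet (P.init ∪ {u | ∃ s ∈ S, ∃ t ∈ s.1.know, u = subst s.2 t} ∪
    {u | ∃ p ∈ ξ, u = p.1 ∨ u = p.2} ∪ {Term.secret})

/-- The set `D ⊆ C` of standard non-variable members of `C`. -/
def Dset (P : Protocol) (S : List (Role × (ℕ → Term)))
    (ξ : List (Term × Term)) : Set Term :=
  {t ∈ Cset P S ξ | t.IsStandard ∧ ∀ x : ℕ, t ≠ .var x}

/-- `nf(Dσ)`: a standard normalized term is *typed* iff it belongs to this set. -/
def TypedSet (P : Protocol) (S : List (Role × (ℕ → Term)))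
    (ξ : List (Term × Term)) (σ : ℕ → Term) : Set Term :=
  nfSubst σ (Dset P S ξ)

/-- `(ξ, σ)` is an attack: a run after which the intruder derives `secret`. -/
def IsAttack (P : Protocol) (S : List (Role × (ℕ → Term)))
    (ξ : List (Term × Term)) (σ : ℕ → Term) : Prop :=
  IsRun P S ξ σ ∧ Derives (nfSubst σ (runKnow P ξ ξ.length)) Term.secret

/-- `P` has a `K`-bounded attack. -/
def HasBoundedAttack (K : ℕ) (P : Protocol) : Prop :=
  ∃ (S : List (Role × (ℕ → Term))) (ξ : List (Term × Term)) (σ : ℕ → Term),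
    S.length = K ∧ IsAttack P S ξ σ


/-! For standard normalized `tᵢ`, `nf(t₁ ⊕ ⋯ ⊕ tₙ)` is the XOR of the sorted list `ts` with
pairs of equal entries cancelled. Its members are standard, so its zap is the normal form of the
XOR of their zaps. The normal form of an XOR depends only on the multiplicities of its factors
modulo 2, and `zap` maps the cancelled pairs to pairs, so cancelling before or after zapping
gives the same term. -/

theorem foldr_pair_injective :
    Function.Injective fun l : List ℕ => l.foldr (fun a b => Nat.pair a b + 1) 0
  | [], [], _ => rfl
  | [], _ :: _, h => by simp at h
  | _ :: _, [], h => by simp at h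
  | a :: l₁, b :: l₂, h => by
    simp only [List.foldr_cons, Nat.add_left_inj, Nat.pair_eq_pair] at h
    rw [h.1, foldr_pair_injective h.2]

theorem encode_injective : Function.Injective encode := by
  intro s
  induction s using Term.rec
    (motive_2 := fun M => ∀ N : List Term, M.map encode = N.map encode → M = N) with
  | xor M ih =>
    intro t h
    cases t <;> simp only [encode, Nat.add_left_inj, Nat.pair_eq_pair, List.attach_map_val] at h
      <;> first | omega | exact congrArg _ (ih _ (foldr_pair_injective h.2))
  | nil => rename_i N h; exact (List.map_eq_nil_iff.1 h.symm).symm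
  | cons a M iha ihM =>
    rename_i N h
    cases N with
    | nil => simp at h
    | cons b N =>
      simp only [List.map_cons, List.cons.injEq] at h
      rw [iha h.1, ihM N h.2]
  | _ =>
    intro t h
    cases t <;> simp only [encode, Nat.add_left_inj, Nat.pair_eq_pair] at h <;> grind

def leT (a b : Term) : Prop := encode a ≤ encode b

theorem sortT_perm (l : List Term) : (sortT l).Perm l := List.mergeSort_perm l _

theorem pairwise_sortT (l : List Term) : (sortT l).Pairwise leT :=
  (List.pairwise_mergeSort (fun a b c hab hbc => by simp only [Nat.ble_eq] at *; omega)
    (fun a b => by simp only [Bool.or_eq_true, Nat.ble_eq]; omega) l).imp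
    fun hab => by simpa [leT] using hab

theorem sortT_eq_self {l : List Term} (h : l.Pairwise leT) : sortT l = l :=
  List.mergeSort_of_pairwise (h.imp fun hab => by simpa [leT] using hab)

theorem cancel_sublist : ∀ l : List Term, (cancel l).Sublist l
  | [] => by rw [cancel]
  | [a] => by rw [cancel]
  | a :: b :: rest => by
    rw [cancel]
    split
    · exact (cancel_sublist rest).trans ((rest.sublist_cons_self b).cons a)
    · exact (cancel_sublist (b :: rest)).cons_cons a

theorem exists_eq_cancel_add_add : ∀ l : List Term,
    ∃ q : Multiset Term, (l : Multiset Term) = cancel l + q + q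
  | [] => ⟨0, by simp [cancel]⟩
  | [a] => ⟨0, by simp [cancel]⟩
  | a :: b :: rest => by
    rw [cancel]
    split
    · next h =>
      obtain rfl : a = b := encode_injective h
      obtain ⟨q, hq⟩ := exists_eq_cancel_add_add rest
      exact ⟨a ::ₘ q, by simp only [← Multiset.cons_coe, hq, Multiset.cons_add, Multiset.add_cons]⟩
    · obtain ⟨q, hq⟩ := exists_eq_cancel_add_add (b :: rest)
      exact ⟨q, by simp only [← Multiset.cons_coe, hq, Multiset.cons_add]⟩

theorem nodup_cancel : ∀ {l : List Term}, l.Pairwise leT → (cancel l).Nodup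
  | [], _ => by rw [cancel]; exact List.nodup_nil
  | [a], _ => by rw [cancel]; exact List.nodup_singleton a
  | a :: b :: rest, hs => by
    rw [cancel]
    split
    · exact nodup_cancel (hs.sublist ((rest.sublist_cons_self b).cons a))
    · next hne =>
      refine (nodup_cancel hs.of_cons).cons fun hmem => hne ?_
      rcases List.mem_cons.1 ((cancel_sublist (b :: rest)).mem hmem) with rfl | hmem
      · rfl
      · exact le_antisymm (List.rel_of_pairwise_cons hs (by simp))
          (List.rel_of_pairwise_cons hs.of_cons hmem)

theorem cancel_eq_self : ∀ {l : List Term}, l.Pairwise leT → l.Nodup → cancel l = l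
  | [], _, _ => by rw [cancel]
  | [a], _, _ => by rw [cancel]
  | a :: b :: rest, hs, hn => by
    rw [cancel, if_neg fun h => (List.nodup_cons.1 hn).1 (by simp [encode_injective h]),
      cancel_eq_self hs.of_cons hn.of_cons]

theorem mem_of_mem_cancel_sortT {a : Term} {l : List Term} (h : a ∈ cancel (sortT l)) : a ∈ l :=
  (sortT_perm l).mem_iff.1 ((cancel_sublist _).mem h)

theorem count_cancel_sortT (l : List Term) (a : Term) :
    (cancel (sortT l)).count a = l.count a % 2 := by
  obtain ⟨q, hq⟩ := exists_eq_cancel_add_add (sortT l)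
  have hc := congrArg (Multiset.count a) hq
  simp only [Multiset.coe_count, Multiset.count_add, (sortT_perm l).count_eq] at hc
  have := List.nodup_iff_count_le_one.1 (nodup_cancel (pairwise_sortT l)) a
  omega

def nfXor (l : List Term) : Term := xorOf (cancel (sortT l))

theorem nfXor_congr {l l' : List Term} (h : ∀ a, l.count a % 2 = l'.count a % 2) :
    nfXor l = nfXor l' := by
  have hperm : (cancel (sortT l)).Perm (cancel (sortT l')) :=
    List.perm_iff_count.2 fun a => by rw [count_cancel_sortT, count_cancel_sortT, h]
  rw [nfXor, nfXor,
    hperm.eq_of_pairwise (fun a b _ _ hab hba => encode_injective (le_antisymm hab hba))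
      ((pairwise_sortT l).sublist (cancel_sublist _))
      ((pairwise_sortT l').sublist (cancel_sublist _))]

theorem nfXor_map_cancel_sortT (f : Term → Term) (l : List Term) :
    nfXor ((cancel (sortT l)).map f) = nfXor (l.map f) := by
  refine nfXor_congr fun a => ?_
  obtain ⟨q, hq⟩ := exists_eq_cancel_add_add (sortT l)
  rw [(Multiset.coe_eq_coe.2 (sortT_perm l))] at hq
  have hc := congrArg (fun s => (s.map f).count a) hq
  simp only [Multiset.map_coe, Multiset.map_add, Multiset.count_add, Multiset.coe_count] at hc
  omega

theorem isStandard_of_mem_facL : ∀ t : Term, ∀ u ∈ facL t, u.IsStandard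
  | .xor M => by
    intro u hu
    rw [facL] at hu
    simp only [List.mem_flatMap, List.mem_attach, true_and] at hu
    obtain ⟨⟨m, hm⟩, hu⟩ := hu
    exact isStandard_of_mem_facL m u hu
  | .var _ | .name _ | .pk _ | .pair _ _ | .senc _ _ | .aenc _ _ => by
    intro u hu; rw [facL] at hu; simp_all [Term.IsStandard]
decreasing_by
  all_goals (have := List.sizeOf_lt_of_mem hm; simp only [Term.xor.sizeOf_spec]; omega)

theorem facL_of_isStandard : ∀ {t : Term}, t.IsStandard → facL t = [t]
  | .var _, _ | .name _, _ | .pk _, _ | .pair _ _, _ | .senc _ _, _ | .aenc _ _, _ => by rw [facL]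

theorem facL_xor_of_isStandard {l : List Term} (h : ∀ u ∈ l, u.IsStandard) :
    facL (.xor l) = l := by
  rw [facL]
  simp [List.flatMap_congr fun u hu => facL_of_isStandard (h u hu)]

theorem nf_xor_of_isStandard {l : List Term} (h : ∀ u ∈ l, u.IsStandard ∧ nf u = u) :
    nf (.xor l) = nfXor l := by
  rw [nf, List.attach_map_val, facL_xor_of_isStandard fun u hu => (h u hu).1,
    List.map_congr_left fun u hu => (h u hu).2, List.map_id']
  rfl

theorem Term.IsStandard.nf : ∀ {t : Term}, t.IsStandard → (nf t).IsStandard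
  | .var _, _ | .name _, _ | .pk _, _ | .pair _ _, _ | .senc _ _, _ | .aenc _ _, _ => by
    rw [DYXor.nf]; trivial

theorem xorOf_cons_cons (a b : Term) (l : List Term) : xorOf (a :: b :: l) = .xor (a :: b :: l) :=
  rfl

theorem nf_xorOf : ∀ {l : List Term}, l.Pairwise leT → l.Nodup →
    (∀ u ∈ l, u.IsStandard ∧ nf u = u) → nf (xorOf l) = xorOf l
  | [], _, _, _ => by rw [xorOf, Term.zero, nf]
  | [a], _, _, h => (h a (List.mem_singleton_self a)).2
  | a :: b :: tl, hs, hn, h => by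
    rw [xorOf_cons_cons, nf_xor_of_isStandard h, nfXor, sortT_eq_self hs, cancel_eq_self hs hn,
      xorOf_cons_cons]

theorem nf_nf : ∀ t : Term, nf (nf t) = nf t
  | .var _ | .name _ => by simp only [nf]
  | .pk u => by rw [nf, nf, nf_nf u]
  | .pair u v | .senc u v | .aenc u v => by rw [nf, nf, nf_nf u, nf_nf v]
  | .xor M => by
    rw [nf]
    have hsorted := (pairwise_sortT ((facL (.xor M)).attach.map fun u => nf u.1))
    refine nf_xorOf (hsorted.sublist (cancel_sublist _)) (nodup_cancel hsorted) fun a ha => ?_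
    obtain ⟨⟨u, hu⟩, -, rfl⟩ := List.mem_map.1 (mem_of_mem_cancel_sortT ha)
    exact ⟨(isStandard_of_mem_facL _ u hu).nf, nf_nf u⟩
decreasing_by
  all_goals first
  | exact sizeOf_lt_of_mem_facL_xor M u hu
  | (simp only [Term.pk.sizeOf_spec, Term.pair.sizeOf_spec, Term.senc.sizeOf_spec,
      Term.aenc.sizeOf_spec]; omega)

theorem Term.IsStandard.zap (T : Set Term) : ∀ {t : Term}, t.IsStandard → (zap T t).IsStandard
  | .var _, _ | .name _, _ => by rw [DYXor.zap]; trivial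
  | .pk _, _ | .pair _ _, _ | .senc _ _, _ | .aenc _ _, _ => by
    rw [DYXor.zap]; split <;> first | exact IsStandard.nf trivial | trivial

theorem nf_zap (T : Set Term) : ∀ t : Term, nf (zap T t) = zap T t
  | .var _ | .name _ => by rw [zap, nf]
  | .pk _ | .pair _ _ | .senc _ _ | .aenc _ _ => by
    rw [zap]; split <;> first | exact nf_nf _ | rw [Term.zero, nf]
  | .xor _ => by rw [zap]; exact nf_nf _

theorem nf_xor_map_zap (T : Set Term) {l : List Term} (h : ∀ u ∈ l, u.IsStandard) :
    nf (.xor (l.map (zap T))) = nfXor (l.map (zap T)) :=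
  nf_xor_of_isStandard <| List.forall_mem_map.2 fun u hu => ⟨(h u hu).zap T, nf_zap T u⟩

theorem zap_xorOf (T : Set Term) : ∀ {l : List Term}, (∀ u ∈ l, u.IsStandard) →
    zap T (xorOf l) = nfXor (l.map (zap T))
  | [], _ => by
    rw [xorOf, Term.zero, zap, List.map_nil, nfXor, sortT, List.mergeSort_nil, cancel, xorOf,
      Term.zero]
  | [a], _ => by
    rw [xorOf, List.map_singleton, nfXor, sortT, List.mergeSort_singleton, cancel, xorOf]
  | a :: b :: l, h => by
    rw [xorOf_cons_cons, zap, List.attach_map_val, nf_xor_map_zap T h]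

theorem zap_nfXor (T : Set Term) {l : List Term} (h : ∀ u ∈ l, u.IsStandard) :
    zap T (nfXor l) = nfXor (l.map (zap T)) := by
  rw [nfXor, zap_xorOf T fun u hu => h u (mem_of_mem_cancel_sortT hu), nfXor_map_cancel_sortT]

theorem zap_nf_xor_general (P : Protocol)
    (S : List (Role × (ℕ → Term))) (ξ : List (Term × Term)) (σ : ℕ → Term)
    (ts : List Term)
    (hts : ∀ u ∈ ts, u.IsStandard ∧ nf u = u ∧ Ground u) :
    zap (TypedSet P S ξ σ) (nf (.xor ts)) =
      nf (.xor (ts.map (zap (TypedSet P S ξ σ)))) := by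
  have hstd : ∀ u ∈ ts, u.IsStandard := fun u hu => (hts u hu).1
  rw [nf_xor_of_isStandard fun u hu => ⟨hstd u hu, (hts u hu).2.1⟩, zap_nfXor _ hstd,
    nf_xor_map_zap _ hstd]

/-- **Corollary, part 2.** In the fixed setting of a protocol run
(with its sets `C`, `D` and run substitution `σ`, so that zap is taken relative
to `nf(Dσ)`): for any multiset `{t_1, …, t_n}` of standard normalized ground
terms, `zap(nf(t_1 ⊕ ⋯ ⊕ t_n)) = nf(zap(t_1) ⊕ ⋯ ⊕ zap(t_n))`. -/
theorem zap_nf_xor (P : Protocol) (hP : P.WF)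
    (S : List (Role × (ℕ → Term))) (ξ : List (Term × Term)) (σ : ℕ → Term)
    (hrun : IsRun P S ξ σ)
    (ts : List Term)
    (hts : ∀ u ∈ ts, u.IsStandard ∧ nf u = u ∧ Ground u) :
    zap (TypedSet P S ξ σ) (nf (.xor ts)) =
      nf (.xor (ts.map (zap (TypedSet P S ξ σ)))) :=
  zap_nf_xor_general P S ξ σ ts hts

end DYXor
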